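/- Let G' be the output of the greedy t-spanner algorithm on a weighted connected graph G. Then the only t-spanner of G' is G' itself: if G'' is a subgraph of G' with d_{G''}(u,v) ≤ t·d_{G'}(u,v) for all u,v, then G'' = G'. -/

import Mathlib

open scoped ENNReal Classical

variable {V : Type*}

/-- The total weight of a walk: the sum of the weights of its (directed) edges. -/
noncomputable def walkWeight (w : V → V → ℝ≥0∞) {G : SimpleGraph V} {u v : V}
    (p : G.Walk u v) : ℝ≥0∞ :=
  (p.darts.map (fun d => w d.toProd.1 d.toProd.2)).sum

/-- Weighted shortest-path distance: the infimum of walk weights (`⊤` if unreachable). -/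
noncomputable def wdist (G : SimpleGraph V) (w : V → V → ℝ≥0∞) (u v : V) : ℝ≥0∞ :=
  ⨅ p : G.Walk u v, walkWeight w p

/-- One greedy pass: process the edges in the given list order, adding an edge whenever the
current spanner distance between its endpoints exceeds `t` times its weight. -/
noncomputable def greedyAux (w : V → V → ℝ≥0∞) (t : ℝ≥0∞) :
    List (V × V) → SimpleGraph V → SimpleGraph V
  | [], G' => G'
  | e :: rest, G' =>
      greedyAux w t rest
        (if t * w e.1 e.2 < wdist G' w e.1 e.2
          then G' ⊔ SimpleGraph.fromEdgeSet {s(e.1, e.2)} else G')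


/-! Every edge `uv` of the greedy spanner `G'` is essential: `t·w(uv) < d_{G' - uv}(u, v)`.
Otherwise a path `P` in `G' - uv` of weight at most `t·w(uv)` closes a cycle with `uv`. Let `g`
be the edge of this cycle that the algorithm added last. When `g` was processed, all other edges
of the cycle were already present and, as edges are processed by nondecreasing weight,
`w(g) ≥ w(uv)`. So the rest of the cycle joins the endpoints of `g` with weight
`w(P) + w(uv) - w(g) ≤ w(P) ≤ t·w(uv) ≤ t·w(g)`, and the algorithm would not have added `g`.
A `t`-spanner `G'' ≤ G'` missing `uv` lies in `G' - uv`, so it cannot have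
`d_{G''}(u, v) ≤ t·d_{G'}(u, v) ≤ t·w(uv)`. -/

open SimpleGraph

lemma apply_eq_of_sym2_eq {α β : Type*} {f : α → α → β} (hf : ∀ a b, f a b = f b a)
    {a b c d : α} (h : s(a, b) = s(c, d)) : f a b = f c d := by
  simpa using congrArg (Sym2.lift ⟨f, hf⟩) h

namespace SimpleGraph.Walk

variable {G : SimpleGraph V} {u v : V}

lemma exists_eq_append_cons_of_mem_darts {p : G.Walk u v} {d : G.Dart} (hd : d ∈ p.darts) :
    ∃ (p₁ : G.Walk u d.fst) (p₂ : G.Walk d.snd v), p = p₁.append (cons d.adj p₂) := by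
  induction p with
  | nil => simp at hd
  | cons h q ih =>
    rcases List.mem_cons.1 hd with rfl | hd
    · exact ⟨nil, q, rfl⟩
    · obtain ⟨p₁, p₂, rfl⟩ := ih hd
      exact ⟨cons h p₁, p₂, rfl⟩

end SimpleGraph.Walk

section Weights

variable {w : V → V → ℝ≥0∞} {G H : SimpleGraph V} {u v x : V}

@[simp] lemma walkWeight_nil : walkWeight w (Walk.nil : G.Walk u u) = 0 := rfl

@[simp] lemma walkWeight_cons (h : G.Adj u v) (p : G.Walk v x) :
    walkWeight w (Walk.cons h p) = w u v + walkWeight w p := by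
  simp [walkWeight]

@[simp] lemma walkWeight_append (p : G.Walk u v) (q : G.Walk v x) :
    walkWeight w (p.append q) = walkWeight w p + walkWeight w q := by
  simp [walkWeight]

lemma walkWeight_reverse (hsymm : ∀ u v, w u v = w v u) (p : G.Walk u v) :
    walkWeight w p.reverse = walkWeight w p := by
  induction p with
  | nil => rfl
  | cons h p ih => simp [ih, hsymm, add_comm]

@[simp] lemma walkWeight_transfer (p : G.Walk u v) (hp : ∀ e ∈ p.edges, e ∈ H.edgeSet) :
    walkWeight w (p.transfer H hp) = walkWeight w p := by
  induction p with
  | nil => rfl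
  | cons h p ih => exact congrArg (w _ _ + ·) (ih _)

lemma wdist_le_walkWeight (p : G.Walk u v) : wdist G w u v ≤ walkWeight w p :=
  iInf_le _ p

lemma wdist_le_of_adj (h : G.Adj u v) : wdist G w u v ≤ w u v := by
  simpa using wdist_le_walkWeight (w := w) (Walk.cons h Walk.nil)

lemma wdist_comm (hsymm : ∀ u v, w u v = w v u) (u v : V) : wdist G w u v = wdist G w v u :=
  le_antisymm
    (le_iInf fun p => (wdist_le_walkWeight p.reverse).trans_eq (walkWeight_reverse hsymm p))
    (le_iInf fun p => (wdist_le_walkWeight p.reverse).trans_eq (walkWeight_reverse hsymm p))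

lemma wdist_anti (h : G ≤ H) (u v : V) : wdist H w u v ≤ wdist G w u v :=
  le_iInf fun p =>
    (wdist_le_walkWeight (p.transfer H fun _ he => edgeSet_mono h (p.edges_subset_edgeSet he))
      ).trans_eq (walkWeight_transfer _ _)

lemma SimpleGraph.reachable_of_wdist_ne_top (h : wdist G w u v ≠ ⊤) : G.Reachable u v := by
  by_contra hr
  exact h (@iInf_of_empty _ _ _ (not_nonempty_iff.1 hr) _)

lemma SimpleGraph.Reachable.exists_isPath_walkWeight_eq_wdist [Finite V] (h : G.Reachable u v) :
    ∃ p : G.Walk u v, p.IsPath ∧ walkWeight w p = wdist G w u v := by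
  have := Fintype.ofFinite V
  have : Nonempty (G.Path u v) := ⟨h.some.toPath⟩
  obtain ⟨q, hq⟩ := Finite.exists_min fun q : G.Path u v => walkWeight w q.1
  refine ⟨q.1, q.2, le_antisymm (le_iInf fun p => (hq p.toPath).trans ?_) (wdist_le_walkWeight _)⟩
  exact List.Sublist.sum_le_sum (p.darts_bypass_sublist_darts.map _) fun _ _ => zero_le

end Weights

section Greedy

variable {w : V → V → ℝ≥0∞} {t : ℝ≥0∞}

lemma greedyAux_append (l₁ l₂ : List (V × V)) (G₀ : SimpleGraph V) :
    greedyAux w t (l₁ ++ l₂) G₀ = greedyAux w t l₂ (greedyAux w t l₁ G₀) := by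
  induction l₁ generalizing G₀ with
  | nil => rfl
  | cons e l₁ ih => exact ih _

lemma mem_edgeSet_greedyAux {l : List (V × V)} {G₀ : SimpleGraph V} {c : Sym2 V}
    (hc : c ∈ (greedyAux w t l G₀).edgeSet) : c ∈ G₀.edgeSet ∨ ∃ f ∈ l, s(f.1, f.2) = c := by
  induction l generalizing G₀ with
  | nil => exact .inl hc
  | cons e l ih =>
    rcases ih hc with hc | ⟨f, hf, rfl⟩
    · split_ifs at hc
      · rw [edgeSet_sup, edgeSet_fromEdgeSet] at hc
        rcases hc with hc | ⟨rfl, -⟩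
        exacts [.inl hc, .inr ⟨e, List.mem_cons_self, rfl⟩]
      · exact .inl hc
    · exact .inr ⟨f, List.mem_cons_of_mem _ hf, rfl⟩

/-- `g` is the edge of `C` that the greedy algorithm added last, and `H` is the spanner at the
moment `g` was added. -/
theorem exists_lastAdded_greedyAux (hsymm : ∀ u v, w u v = w v u) {l : List (V × V)}
    (hsorted : (l.map fun e => w e.1 e.2).Pairwise (· ≤ ·)) {C : Set (Sym2 V)}
    (hC : C ⊆ (greedyAux w t l ⊥).edgeSet) (hne : C.Nonempty) :
    ∃ g ∈ C, ∃ H : SimpleGraph V, (∀ c ∈ C, c ≠ g → c ∈ H.edgeSet) ∧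
      ∀ a b, s(a, b) = g → t * w a b < wdist H w a b ∧ ∀ x y, s(x, y) ∈ C → w x y ≤ w a b := by
  induction l using List.reverseRecOn with
  | nil => simp_all [greedyAux, Set.subset_empty_iff, Set.nonempty_iff_ne_empty]
  | append_singleton l e ih =>
    rw [List.map_append, List.pairwise_append] at hsorted
    rw [greedyAux_append] at hC
    set H := greedyAux w t l ⊥
    by_cases hCH : C ⊆ H.edgeSet
    · exact ih hsorted.1 hCH
    obtain ⟨c, hcC, hcH⟩ := Set.not_subset.1 hCH
    have hadd : t * w e.1 e.2 < wdist H w e.1 e.2 := by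
      by_contra h
      exact hCH (by simpa [greedyAux, h] using hC)
    have hCe : C ⊆ H.edgeSet ∪ {s(e.1, e.2)} := fun c' hc' => by
      have := hC hc'
      simp only [greedyAux, if_pos hadd, edgeSet_sup, edgeSet_fromEdgeSet] at this
      exact this.imp_right And.left
    obtain rfl : c = s(e.1, e.2) := (hCe hcC).resolve_left hcH
    refine ⟨_, hcC, H, fun c' hc' hne => (hCe hc').resolve_right hne, fun a b hab => ⟨?_, ?_⟩⟩
    · rwa [apply_eq_of_sym2_eq hsymm hab, apply_eq_of_sym2_eq (wdist_comm hsymm) hab]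
    · intro x y hxy
      rw [apply_eq_of_sym2_eq hsymm hab]
      rcases hCe hxy with hxyH | hxye
      · obtain ⟨f, hf, hfxy⟩ := (mem_edgeSet_greedyAux hxyH).resolve_left (by simp)
        rw [← apply_eq_of_sym2_eq hsymm hfxy]
        exact hsorted.2.2 _ (List.mem_map_of_mem hf) _ (List.mem_singleton_self _)
      · exact (apply_eq_of_sym2_eq hsymm hxye).le

end Greedy

section Rigidity

variable {w : V → V → ℝ≥0∞} {t : ℝ≥0∞} {l : List (V × V)} {u v : V}

theorem mul_lt_walkWeight_of_isTrail (hsymm : ∀ u v, w u v = w v u)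
    (hsorted : (l.map fun e => w e.1 e.2).Pairwise (· ≤ ·))
    (huv : (greedyAux w t l ⊥).Adj u v) {P : (greedyAux w t l ⊥).Walk u v} (hP : P.IsTrail)
    (huvP : s(u, v) ∉ P.edges) : t * w u v < walkWeight w P := by
  by_contra! hPw
  have hC : insert s(u, v) {c | c ∈ P.edges} ⊆ (greedyAux w t l ⊥).edgeSet :=
    Set.insert_subset huv fun _ hc => P.edges_subset_edgeSet hc
  obtain ⟨g, hg, H, hH, hlast⟩ :=
    exists_lastAdded_greedyAux hsymm hsorted hC (Set.insert_nonempty _ _)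
  rcases hg with rfl | hgP
  · have hPH : ∀ c ∈ P.edges, c ∈ H.edgeSet := fun c hc =>
      hH c (.inr hc) fun h => huvP (h ▸ hc)
    refine (hlast u v rfl).1.not_ge ?_
    calc wdist H w u v ≤ walkWeight w (P.transfer H hPH) := wdist_le_walkWeight _
      _ = walkWeight w P := walkWeight_transfer _ _
      _ ≤ t * w u v := hPw
  obtain ⟨d, hdP, rfl⟩ := List.mem_map.1 hgP
  obtain ⟨hadd, hmax⟩ := hlast d.fst d.snd rfl
  obtain ⟨p₁, p₂, hP₁₂⟩ := Walk.exists_eq_append_cons_of_mem_darts hdP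
  have hnodup := hP.edges_nodup
  simp only [hP₁₂, Walk.edges_append, Walk.edges_cons, List.nodup_append, List.nodup_cons]
    at hnodup
  -- the cycle `P + uv` with the edge `d` removed
  let Q := p₁.reverse.append (Walk.cons huv p₂.reverse)
  have hQH : ∀ c ∈ Q.edges, c ∈ H.edgeSet := by
    intro c hc
    simp only [Q, Walk.edges_append, Walk.edges_cons, Walk.edges_reverse, List.mem_append,
      List.mem_reverse, List.mem_cons] at hc
    rcases hc with hc | rfl | hc
    · refine hH c (.inr (by simp [hP₁₂, hc])) fun hcd => ?_
      exact hnodup.2.2 _ hc _ List.mem_cons_self hcd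
    · exact hH _ (.inl rfl) fun h => huvP (h ▸ hgP)
    · refine hH c (.inr (by simp [hP₁₂, hc])) fun hcd => ?_
      subst hcd
      exact hnodup.2.1.1 hc
  refine hadd.not_ge ?_
  calc wdist H w d.fst d.snd ≤ walkWeight w (Q.transfer H hQH) := wdist_le_walkWeight _
    _ = walkWeight w p₁ + (w u v + walkWeight w p₂) := by
      rw [walkWeight_transfer]; simp [Q, walkWeight_reverse hsymm]
    _ ≤ walkWeight w p₁ + (w d.fst d.snd + walkWeight w p₂) := by
      gcongr; exact hmax u v (.inl rfl)
    _ = walkWeight w P := by simp [hP₁₂]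
    _ ≤ t * w u v := hPw
    _ ≤ t * w d.fst d.snd := by gcongr; exact hmax u v (.inl rfl)

theorem mul_lt_wdist_deleteEdges_greedyAux [Finite V] (hsymm : ∀ u v, w u v = w v u)
    (hsorted : (l.map fun e => w e.1 e.2).Pairwise (· ≤ ·))
    (huv : (greedyAux w t l ⊥).Adj u v) :
    t * w u v < wdist ((greedyAux w t l ⊥).deleteEdges {s(u, v)}) w u v := by
  have hfin : t * w u v ≠ ⊤ := by
    obtain ⟨g, rfl, H, -, hlast⟩ := exists_lastAdded_greedyAux hsymm hsorted
      (Set.singleton_subset_iff.2 ((mem_edgeSet _).2 huv)) (Set.singleton_nonempty _)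
    exact (hlast u v rfl).1.ne_top
  by_contra! h
  obtain ⟨P, hP, hPw⟩ := (reachable_of_wdist_ne_top
    (ne_top_of_le_ne_top hfin h)).exists_isPath_walkWeight_eq_wdist (w := w)
  have hPH : ∀ c ∈ P.edges, c ∈ (greedyAux w t l ⊥).edgeSet := fun c hc =>
    edgeSet_mono (deleteEdges_le _) (P.edges_subset_edgeSet hc)
  have huvP : s(u, v) ∉ (P.transfer _ hPH).edges := by
    rw [Walk.edges_transfer]
    intro hc
    simpa [edgeSet_deleteEdges] using P.edges_subset_edgeSet hc
  refine (mul_lt_walkWeight_of_isTrail hsymm hsorted huv (hP.transfer hPH).isTrail huvP).not_ge ?_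
  rwa [walkWeight_transfer, hPw]

end Rigidity

theorem greedy_spanner_rigid_general [Fintype V]
    (w : V → V → ℝ≥0∞) (hsymm : ∀ u v, w u v = w v u)
    (t : ℝ≥0∞)
    (l : List (V × V))
    (hsorted : (l.map (fun e => w e.1 e.2)).Pairwise (· ≤ ·))
    (G'' : SimpleGraph V) (hsub : G'' ≤ greedyAux w t l ⊥)
    (hspan : ∀ u v : V, wdist G'' w u v ≤ t * wdist (greedyAux w t l ⊥) w u v) :
    G'' = greedyAux w t l ⊥ := by
  refine le_antisymm hsub fun u v huv => by_contra fun hno => ?_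
  have hdel : G'' ≤ (greedyAux w t l ⊥).deleteEdges {s(u, v)} := fun x y hxy =>
    (deleteEdges_adj ..).2 ⟨hsub hxy, fun h => hno (by rw [← mem_edgeSet, ← h.out]; exact hxy)⟩
  refine (mul_lt_wdist_deleteEdges_greedyAux hsymm hsorted huv).not_ge ?_
  calc wdist ((greedyAux w t l ⊥).deleteEdges {s(u, v)}) w u v ≤ wdist G'' w u v :=
        wdist_anti hdel u v
    _ ≤ t * wdist (greedyAux w t l ⊥) w u v := hspan u v
    _ ≤ t * w u v := by gcongr; exact wdist_le_of_adj huv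

/-- Filtser–Solomon, Lemma 3: the only `t`-spanner of a greedy `t`-spanner `G'` is `G'`
itself: if `G'' ≤ G'` satisfies `d_{G''}(u,v) ≤ t · d_{G'}(u,v)` for all `u, v`,
then `G'' = G'`. -/
theorem greedy_spanner_rigid [Fintype V]
    (G : SimpleGraph V) (hconn : G.Connected)
    (w : V → V → ℝ≥0∞) (hsymm : ∀ u v, w u v = w v u)
    (hpos : ∀ u v, G.Adj u v → 0 < w u v) (hfin : ∀ u v, G.Adj u v → w u v ≠ ⊤)
    (t : ℝ≥0∞) (ht : 1 ≤ t)
    (l : List (V × V))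
    (hl₁ : ∀ e ∈ l, G.Adj e.1 e.2)
    (hl₂ : ∀ u v : V, G.Adj u v → (u, v) ∈ l ∨ (v, u) ∈ l)
    (hsorted : (l.map (fun e => w e.1 e.2)).Pairwise (· ≤ ·))
    (G'' : SimpleGraph V) (hsub : G'' ≤ greedyAux w t l ⊥)
    (hspan : ∀ u v : V, wdist G'' w u v ≤ t * wdist (greedyAux w t l ⊥) w u v) :
    G'' = greedyAux w t l ⊥ :=
  greedy_spanner_rigid_general w hsymm t l hsorted G'' hsub hspan
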